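/- arXiv:1004.0680 — 2 statements merged into one kernel-verified Lean document; each statement's English description precedes it below -/
import Mathlib

section
/- Let 0 < H₁ < 1 and α > 0 with α + H₁ < 1. Let B^{H₁} be a fractional Brownian motion with Hurst parameter H₁, and for n ≥ 1 set T'_n = Σ_{i=0}^{n−1} E[K(n^α B^{H₁}_i)²]. Then lim_{n→∞} n^{α+H₁−1} T'_n = 1/(2π√2(1−H₁)). -/
open MeasureTheory ProbabilityTheory Filter Topology Real

/-- The standard Gaussian kernel `K(x) = (2π)^{-1/2} e^{-x²/2}`. -/
noncomputable def K (x : ℝ) : ℝ := (Real.sqrt (2 * Real.pi))⁻¹ * Real.exp (-(x ^ 2) / 2)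

/-- Covariance function of fractional Brownian motion with Hurst parameter `H`. -/
noncomputable def RH (H t s : ℝ) : ℝ :=
  (t ^ (2 * H) + s ^ (2 * H) - |t - s| ^ (2 * H)) / 2

/-- `B` is a fractional Brownian motion with Hurst parameter `H` on `(Ω, μ)`:
a centered Gaussian process, starting from `0`, with covariance `R_H`. -/
structure IsFBM {Ω : Type*} [MeasurableSpace Ω] (μ : Measure Ω) (H : ℝ)
    (B : ℝ → Ω → ℝ) : Prop where
  meas : ∀ t : ℝ, Measurable (B t)
  zero : ∀ᵐ ω ∂μ, B 0 ω = 0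
  gaussian : ∀ (n : ℕ) (t : Fin n → ℝ) (c : Fin n → ℝ), (∀ i, 0 ≤ t i) →
    ∃ v : NNReal, μ.map (fun ω => ∑ i, c i * B (t i) ω) = gaussianReal 0 v
  cov : ∀ s t : ℝ, 0 ≤ s → 0 ≤ t → ∫ ω, B s ω * B t ω ∂μ = RH H s t


section Aux
open Set NNReal

lemma integral_even_eq_two_mul {f : ℝ → ℝ} (hf : Integrable f) (he : ∀ x, f (-x) = f x) :
    ∫ x, f x = 2 * ∫ x in Ioi (0:ℝ), f x := by
  have h : ∫ x in Iic (0:ℝ), f x = ∫ x in Ioi (0:ℝ), f x := by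
    rw [show Iic (0:ℝ) = Iic (-0) by norm_num, ← integral_comp_neg_Ioi]
    simp_rw [he]
  rw [two_mul, ← intervalIntegral.integral_Iic_add_Ioi (b := (0:ℝ)) hf.integrableOn hf.integrableOn, h]

lemma integral_sq_mul_exp (b : ℝ) (hb : 0 < b) :
    ∫ x : ℝ, x ^ 2 * Real.exp (-b * x ^ 2) = Real.sqrt (π / b) / (2 * b) := by
  have h2 : ∀ x : ℝ, x ^ (2:ℝ) = x ^ (2:ℕ) := fun x => by
    rw [show ((2:ℝ)) = ((2:ℕ):ℝ) by norm_num, Real.rpow_natCast]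
  have hint : Integrable (fun x : ℝ => x ^ 2 * Real.exp (-b * x ^ 2)) := by
    have := integrable_rpow_mul_exp_neg_mul_sq hb (s := 2) (by norm_num)
    simpa [h2] using this
  rw [integral_even_eq_two_mul hint (fun x => by ring_nf)]
  have h1 : ∫ x in Ioi (0:ℝ), x ^ 2 * Real.exp (-b * x ^ 2)
      = b ^ (-(2 + 1) / 2 : ℝ) * (1 / 2) * Real.Gamma ((2 + 1) / 2) := by
    rw [← integral_rpow_mul_exp_neg_mul_rpow (by norm_num : (0:ℝ) < 2) (by norm_num : (-1:ℝ) < 2) hb]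
    refine setIntegral_congr_fun measurableSet_Ioi (fun x hx => ?_)
    simp [h2]
  rw [h1]
  have hG : Real.Gamma ((2 + 1) / 2) = Real.sqrt π / 2 := by
    rw [show ((2:ℝ) + 1) / 2 = 1 / 2 + 1 by norm_num, Real.Gamma_add_one (by norm_num),
      Real.Gamma_one_half_eq]
    ring
  rw [hG]
  have hb' : b ^ (-(2 + 1) / 2 : ℝ) = (Real.sqrt b)⁻¹ * b⁻¹ := by
    rw [show (-(2 + 1) / 2 : ℝ) = -(1/2) + (-1) by norm_num, Real.rpow_add hb,
      Real.rpow_neg_one, Real.rpow_neg hb.le, Real.sqrt_eq_rpow]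
  rw [hb', Real.sqrt_div pi_nonneg]
  have h3 : Real.sqrt b ≠ 0 := ne_of_gt (Real.sqrt_pos.mpr hb)
  field_simp

lemma K_sq (y : ℝ) : (K y) ^ 2 = (2 * π)⁻¹ * Real.exp (-(y ^ 2)) := by
  rw [K, mul_pow, inv_pow, Real.sq_sqrt (by positivity : (0:ℝ) ≤ 2*π),
    sq (Real.exp _), ← Real.exp_add]
  congr 1; ring

lemma integral_gaussianReal_of_ne {v : ℝ≥0} (hv : v ≠ 0) (g : ℝ → ℝ) :
    ∫ x, g x ∂(gaussianReal 0 v) = ∫ x, gaussianPDFReal 0 v x * g x := by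
  rw [gaussianReal_of_var_ne_zero 0 hv, gaussianPDF_def]
  have h : (fun x => ENNReal.ofReal (gaussianPDFReal 0 v x))
      = fun x => ((Real.toNNReal (gaussianPDFReal 0 v x) : ℝ≥0) : ENNReal) := rfl
  rw [h, integral_withDensity_eq_integral_smul ((measurable_gaussianPDFReal 0 v).real_toNNReal)]
  congr 1; funext x
  simp [NNReal.smul_def, Real.coe_toNNReal _ (gaussianPDFReal_nonneg 0 v x)]

lemma integral_sq_gaussianReal (v : ℝ≥0) : ∫ x, x ^ 2 ∂(gaussianReal 0 v) = v := by
  by_cases hv : v = 0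
  · simp [hv, gaussianReal_zero_var]
  · have hv' : (0:ℝ) < v := lt_of_le_of_ne v.coe_nonneg (by exact_mod_cast Ne.symm hv)
    rw [integral_gaussianReal_of_ne hv, gaussianPDFReal_def]
    have hb : (0:ℝ) < (2*(v:ℝ))⁻¹ := by positivity
    have h : ∀ x : ℝ, (Real.sqrt (2*π*v))⁻¹ * Real.exp (-(x-0)^2/(2*(v:ℝ))) * x ^ 2
        = (Real.sqrt (2*π*v))⁻¹ * (x ^ 2 * Real.exp (-(2*(v:ℝ))⁻¹ * x ^ 2)) := by
      intro x
      rw [show -(x-0)^2/(2*(v:ℝ)) = -(2*(v:ℝ))⁻¹ * x ^ 2 by ring]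
      ring
    simp_rw [h]
    rw [integral_const_mul, integral_sq_mul_exp _ hb]
    have h2 : π / (2*(v:ℝ))⁻¹ = 2*π*v := by field_simp
    rw [h2]
    have h3 : Real.sqrt (2*π*v) ≠ 0 := ne_of_gt (Real.sqrt_pos.mpr (by positivity))
    field_simp

lemma integral_K_sq_gaussianReal (v : ℝ≥0) (c : ℝ) :
    ∫ x, (K (c * x)) ^ 2 ∂(gaussianReal 0 v)
      = (2 * π)⁻¹ * (Real.sqrt (1 + 2 * v * c ^ 2))⁻¹ := by
  by_cases hv : v = 0
  · simp [hv, gaussianReal_zero_var, K_sq]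
  · have hv' : (0:ℝ) < v := lt_of_le_of_ne v.coe_nonneg (by exact_mod_cast Ne.symm hv)
    set b : ℝ := c ^ 2 + (2*(v:ℝ))⁻¹ with hbdef
    have hb : (0:ℝ) < b := by positivity
    rw [integral_gaussianReal_of_ne hv, gaussianPDFReal_def]
    have h : ∀ x : ℝ, (Real.sqrt (2*π*v))⁻¹ * Real.exp (-(x-0)^2/(2*(v:ℝ))) * (K (c*x)) ^ 2
        = (2*π)⁻¹ * (Real.sqrt (2*π*v))⁻¹ * Real.exp (-b * x ^ 2) := by
      intro x
      rw [K_sq, show -b * x ^ 2 = -(x-0)^2/(2*(v:ℝ)) + -((c*x)^2) by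
        rw [hbdef]; field_simp; ring, Real.exp_add]
      ring
    simp_rw [h]
    rw [integral_const_mul, integral_gaussian]
    have hvne : (v:ℝ) ≠ 0 := ne_of_gt hv'
    have key : (π / b) * (1 + 2*(v:ℝ)*c^2) = 2*π*(v:ℝ) := by
      rw [hbdef]; field_simp; ring
    have h4 : Real.sqrt (2*π*(v:ℝ)) = Real.sqrt (π/b) * Real.sqrt (1 + 2*(v:ℝ)*c^2) := by
      rw [← Real.sqrt_mul (by positivity) _, key]
    have h5 : Real.sqrt (π/b) ≠ 0 := ne_of_gt (Real.sqrt_pos.mpr (by positivity))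
    have h6 : Real.sqrt (1 + 2*(v:ℝ)*c^2) ≠ 0 := ne_of_gt (Real.sqrt_pos.mpr (by positivity))
    rw [h4]
    field_simp


lemma bern_up {H₁ : ℝ} (hH₁ : 0 < H₁) (hH₁' : H₁ < 1) {x : ℝ} (hx : 1 ≤ x) :
    (x + 1) ^ (1 - H₁) - x ^ (1 - H₁) ≤ (1 - H₁) * x ^ (-H₁) := by
  have hx0 : (0:ℝ) < x := lt_of_lt_of_le one_pos hx
  have e1 : x + 1 = x * (1 + 1/x) := by field_simp
  have hB : (1 + 1/x) ^ (1 - H₁) ≤ 1 + (1 - H₁) * (1/x) :=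
    rpow_one_add_le_one_add_mul_self (by linarith [one_div_pos.mpr hx0]) (by linarith) (by linarith)
  have e2 : (x + 1) ^ (1 - H₁) ≤ x ^ (1 - H₁) * (1 + (1 - H₁) * (1/x)) := by
    rw [e1, Real.mul_rpow hx0.le (by positivity)]
    exact mul_le_mul_of_nonneg_left hB (by positivity)
  have e3 : x ^ (1 - H₁) * (1/x) = x ^ (-H₁) := by
    rw [one_div, ← Real.rpow_neg_one x, ← Real.rpow_add hx0]
    congr 1; ring
  have e4 : x ^ (1 - H₁) * (1 + (1 - H₁) * (1/x))
      = x ^ (1 - H₁) + (1 - H₁) * x ^ (-H₁) := by rw [← e3]; ring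
  linarith [e2, e4.symm.le]

lemma bern_lo {H₁ : ℝ} (hH₁ : 0 < H₁) (hH₁' : H₁ < 1) {x : ℝ} (hx : 1 ≤ x) :
    (1 - H₁) * x ^ (-H₁) ≤ x ^ (1 - H₁) - (x - 1) ^ (1 - H₁) := by
  have hx0 : (0:ℝ) < x := lt_of_lt_of_le one_pos hx
  have hinv : 1/x ≤ 1 := by rw [div_le_one hx0]; exact hx
  have e1 : x - 1 = x * (1 + (-(1/x))) := by
    rw [mul_add, mul_neg, mul_one_div, div_self hx0.ne']; ring
  have hB : (1 + (-(1/x))) ^ (1 - H₁) ≤ 1 + (1 - H₁) * (-(1/x)) :=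
    rpow_one_add_le_one_add_mul_self (by linarith) (by linarith) (by linarith)
  have e2 : (x - 1) ^ (1 - H₁) ≤ x ^ (1 - H₁) * (1 + (1 - H₁) * (-(1/x))) := by
    rw [e1, Real.mul_rpow hx0.le (by linarith)]
    exact mul_le_mul_of_nonneg_left hB (by positivity)
  have e3 : x ^ (1 - H₁) * (1/x) = x ^ (-H₁) := by
    rw [one_div, ← Real.rpow_neg_one x, ← Real.rpow_add hx0]
    congr 1; ring
  have e4 : x ^ (1 - H₁) * (1 + (1 - H₁) * (-(1/x)))
      = x ^ (1 - H₁) - (1 - H₁) * x ^ (-H₁) := by rw [← e3]; ring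
  linarith [e2, e4.symm.le]

lemma sum_inv_pow_le {H₁ : ℝ} (hH₁ : 0 < H₁) (hH₁' : H₁ < 1) (n : ℕ) :
    ∑ i ∈ Finset.Ico 1 n, ((i:ℝ)) ^ (-H₁) ≤ (n:ℝ) ^ (1 - H₁) / (1 - H₁) := by
  have hp : (0:ℝ) < 1 - H₁ := by linarith
  have key : ∀ k : ℕ, ((1 + k : ℕ):ℝ) ^ (-H₁)
      ≤ (((k+1:ℕ):ℝ) ^ (1 - H₁) - ((k:ℕ):ℝ) ^ (1 - H₁)) / (1 - H₁) := by
    intro k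
    rw [le_div_iff₀ hp, mul_comm]
    have e1 : ((1+k:ℕ):ℝ) = ((k+1:ℕ):ℝ) := by push_cast; ring
    have hx : (1:ℝ) ≤ ((k+1:ℕ):ℝ) := by push_cast; linarith [Nat.cast_nonneg (α := ℝ) k]
    have h := bern_lo hH₁ hH₁' hx
    have e2 : ((k+1:ℕ):ℝ) - 1 = ((k:ℕ):ℝ) := by push_cast; ring
    rw [e2] at h
    rw [e1]
    exact h
  calc ∑ i ∈ Finset.Ico 1 n, ((i:ℝ)) ^ (-H₁)
      = ∑ k ∈ Finset.range (n - 1), ((1 + k : ℕ):ℝ) ^ (-H₁) := by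
        rw [Finset.sum_Ico_eq_sum_range]
    _ ≤ ∑ k ∈ Finset.range (n - 1), (((k+1:ℕ):ℝ) ^ (1 - H₁) - ((k:ℕ):ℝ) ^ (1 - H₁)) / (1 - H₁) :=
        Finset.sum_le_sum (fun k _ => key k)
    _ = (((n-1:ℕ):ℝ) ^ (1 - H₁) - ((0:ℕ):ℝ) ^ (1 - H₁)) / (1 - H₁) := by
        rw [← Finset.sum_div, Finset.sum_range_sub (fun k => ((k:ℕ):ℝ) ^ (1 - H₁))]
    _ ≤ (n:ℝ) ^ (1 - H₁) / (1 - H₁) := by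
        have h0 : ((0:ℕ):ℝ) ^ (1 - H₁) = 0 := by
          simp [Real.zero_rpow (ne_of_gt hp)]
        rw [h0, sub_zero]
        gcongr
        exact_mod_cast Nat.sub_le n 1

lemma le_sum_inv_pow {H₁ : ℝ} (hH₁ : 0 < H₁) (hH₁' : H₁ < 1) {n : ℕ} (hn : 1 ≤ n) :
    ((n:ℝ) ^ (1 - H₁) - 1) / (1 - H₁) ≤ ∑ i ∈ Finset.Ico 1 n, ((i:ℝ)) ^ (-H₁) := by
  have hp : (0:ℝ) < 1 - H₁ := by linarith
  have key : ∀ k : ℕ, (((1+(k+1):ℕ):ℝ) ^ (1 - H₁) - ((1+k:ℕ):ℝ) ^ (1 - H₁)) / (1 - H₁)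
      ≤ ((1 + k : ℕ):ℝ) ^ (-H₁) := by
    intro k
    rw [div_le_iff₀ hp, mul_comm]
    have hx : (1:ℝ) ≤ ((1+k:ℕ):ℝ) := by push_cast; linarith [Nat.cast_nonneg (α := ℝ) k]
    have h := bern_up hH₁ hH₁' hx
    have e : ((1+(k+1):ℕ):ℝ) = ((1+k:ℕ):ℝ) + 1 := by push_cast; ring
    rw [e]
    exact h
  calc ((n:ℝ) ^ (1 - H₁) - 1) / (1 - H₁)
      = ∑ k ∈ Finset.range (n - 1), ((((1+(k+1)):ℕ):ℝ) ^ (1 - H₁) - ((1+k:ℕ):ℝ) ^ (1 - H₁)) / (1 - H₁) := by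
        rw [← Finset.sum_div, Finset.sum_range_sub (fun k => ((1+k:ℕ):ℝ) ^ (1 - H₁))]
        have h1 : (1 + (n-1) : ℕ) = n := by omega
        rw [h1]
        norm_num
    _ ≤ ∑ k ∈ Finset.range (n - 1), ((1 + k : ℕ):ℝ) ^ (-H₁) :=
        Finset.sum_le_sum (fun k _ => key k)
    _ = ∑ i ∈ Finset.Ico 1 n, ((i:ℝ)) ^ (-H₁) :=
        (Finset.sum_Ico_eq_sum_range (fun i => ((i:ℕ):ℝ) ^ (-H₁)) 1 n).symm

lemma tendsto_S {H₁ : ℝ} (hH₁ : 0 < H₁) (hH₁' : H₁ < 1) :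
    Tendsto (fun n : ℕ => (n:ℝ) ^ (H₁ - 1) * ∑ i ∈ Finset.Ico 1 n, ((i:ℝ)) ^ (-H₁))
      atTop (𝓝 (1 / (1 - H₁))) := by
  have hp : (0:ℝ) < 1 - H₁ := by linarith
  have hnc : Tendsto (fun n : ℕ => (n:ℝ) ^ (H₁ - 1)) atTop (𝓝 0) := by
    have h := (tendsto_rpow_neg_atTop hp).comp (tendsto_natCast_atTop_atTop (R := ℝ))
    have e : (fun n : ℕ => (n:ℝ) ^ (H₁ - 1)) = (fun x : ℝ => x ^ (-(1 - H₁))) ∘ (Nat.cast) := by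
      funext n; simp [Function.comp, neg_sub]
    rw [e]; exact h
  have hlow : Tendsto (fun n : ℕ => (1 - (n:ℝ) ^ (H₁ - 1)) / (1 - H₁)) atTop
      (𝓝 (1 / (1 - H₁))) := by
    simpa using (tendsto_const_nhds (x := (1:ℝ)).sub hnc).div_const (1 - H₁)
  refine tendsto_of_tendsto_of_tendsto_of_le_of_le' hlow tendsto_const_nhds ?_ ?_
  · filter_upwards [eventually_ge_atTop 1] with n hn
    have hn0 : (0:ℝ) < (n:ℝ) := by exact_mod_cast hn
    have h1 : (n:ℝ) ^ (H₁ - 1) * (n:ℝ) ^ (1 - H₁) = 1 := by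
      rw [← Real.rpow_add hn0]; norm_num
    have h2 := le_sum_inv_pow hH₁ hH₁' hn
    have h3 := mul_le_mul_of_nonneg_left h2 (Real.rpow_nonneg hn0.le (H₁ - 1))
    calc (1 - (n:ℝ) ^ (H₁ - 1)) / (1 - H₁)
        = (n:ℝ) ^ (H₁ - 1) * (((n:ℝ) ^ (1 - H₁) - 1) / (1 - H₁)) := by
          field_simp
          nlinarith [h1]
      _ ≤ _ := h3
  · filter_upwards [eventually_ge_atTop 1] with n hn
    have hn0 : (0:ℝ) < (n:ℝ) := by exact_mod_cast hn
    have h1 : (n:ℝ) ^ (H₁ - 1) * (n:ℝ) ^ (1 - H₁) = 1 := by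
      rw [← Real.rpow_add hn0]; norm_num
    have h2 := sum_inv_pow_le hH₁ hH₁' n
    have h3 := mul_le_mul_of_nonneg_left h2 (Real.rpow_nonneg hn0.le (H₁ - 1))
    calc (n:ℝ) ^ (H₁ - 1) * ∑ i ∈ Finset.Ico 1 n, ((i:ℝ)) ^ (-H₁)
        ≤ (n:ℝ) ^ (H₁ - 1) * ((n:ℝ) ^ (1 - H₁) / (1 - H₁)) := h3
      _ = 1 / (1 - H₁) := by
          rw [mul_div_assoc'] at *
          rw [h1]

lemma tendsto_main {H₁ α : ℝ} (hH₁ : 0 < H₁) (hH₁' : H₁ < 1) (hα : 0 < α) (hsum : α + H₁ < 1) :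
    Tendsto (fun n : ℕ => (n:ℝ) ^ (α + H₁ - 1) *
        ∑ i ∈ Finset.range n, (Real.sqrt (1 + 2 * (i:ℝ) ^ (2*H₁) * ((n:ℝ) ^ α) ^ 2))⁻¹)
      atTop (𝓝 ((Real.sqrt 2)⁻¹ * (1 / (1 - H₁)))) := by
  have hp : (0:ℝ) < 1 - H₁ := by linarith
  set S : ℕ → ℝ := fun n => (n:ℝ) ^ (H₁ - 1) * ∑ i ∈ Finset.Ico 1 n, ((i:ℝ)) ^ (-H₁) with hS
  set u : ℕ → ℕ → ℝ :=
    fun n i => (Real.sqrt (1 + 2 * (i:ℝ) ^ (2*H₁) * ((n:ℝ) ^ α) ^ 2))⁻¹ with hu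
  -- first factor of the lower bound
  have key1 : ∀ n : ℕ, 1 ≤ n →
      (n:ℝ) ^ α * (Real.sqrt (1 + 2*((n:ℝ)^α)^2))⁻¹
        = (Real.sqrt ((n:ℝ) ^ (-(2*α)) + 2))⁻¹ := by
    intro n hn
    have hn0 : (0:ℝ) < (n:ℝ) := by exact_mod_cast hn
    have hy : (0:ℝ) < (n:ℝ) ^ α := Real.rpow_pos_of_pos hn0 α
    have hnc : (n:ℝ) ^ (-(2*α)) = (((n:ℝ)^α)^2)⁻¹ := by
      rw [← Real.rpow_natCast ((n:ℝ)^α) 2, ← Real.rpow_mul hn0.le, ← Real.rpow_neg hn0.le]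
      norm_num [mul_comm]
    have he : 1 + 2*((n:ℝ)^α)^2 = ((n:ℝ) ^ (-(2*α)) + 2) * ((n:ℝ)^α)^2 := by
      rw [hnc]; field_simp
    rw [he, Real.sqrt_mul (by positivity), Real.sqrt_sq hy.le, mul_inv]
    field_simp
  -- limit of the lower-bound prefactor
  have hg : Tendsto (fun n : ℕ => (Real.sqrt ((n:ℝ) ^ (-(2*α)) + 2))⁻¹) atTop
      (𝓝 ((Real.sqrt 2)⁻¹)) := by
    have t1 : Tendsto (fun n : ℕ => (n:ℝ) ^ (-(2*α))) atTop (𝓝 0) := by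
      have h := (tendsto_rpow_neg_atTop (by positivity : (0:ℝ) < 2*α)).comp
        (tendsto_natCast_atTop_atTop (R := ℝ))
      exact h
    have t2 : Tendsto (fun n : ℕ => (n:ℝ) ^ (-(2*α)) + 2) atTop (𝓝 2) := by
      simpa using t1.add_const 2
    have t3 : Tendsto (fun n : ℕ => Real.sqrt ((n:ℝ) ^ (-(2*α)) + 2)) atTop
        (𝓝 (Real.sqrt 2)) := (Real.continuous_sqrt.tendsto 2).comp t2
    exact t3.inv₀ (by positivity)
  have hSlim := tendsto_S hH₁ hH₁'
  -- squeeze for the tail part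
  have hb : Tendsto (fun n : ℕ => (n:ℝ) ^ (α + H₁ - 1) * ∑ i ∈ Finset.Ico 1 n, u n i) atTop
      (𝓝 ((Real.sqrt 2)⁻¹ * (1 / (1 - H₁)))) := by
    refine tendsto_of_tendsto_of_tendsto_of_le_of_le' (hg.mul hSlim)
      (hSlim.const_mul (Real.sqrt 2)⁻¹) ?_ ?_
    · -- lower bound
      filter_upwards [eventually_ge_atTop 1] with n hn
      have hn0 : (0:ℝ) < (n:ℝ) := by exact_mod_cast hn
      have hy : (0:ℝ) < (n:ℝ) ^ α := Real.rpow_pos_of_pos hn0 α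
      have hterm : ∀ i ∈ Finset.Ico 1 n,
          (Real.sqrt (1 + 2*((n:ℝ)^α)^2))⁻¹ * (i:ℝ) ^ (-H₁) ≤ u n i := by
        intro i hi
        have hi1 : (1:ℝ) ≤ (i:ℝ) := by
          exact_mod_cast (Finset.mem_Ico.mp hi).1
        have hi0 : (0:ℝ) < (i:ℝ) := lt_of_lt_of_le one_pos hi1
        have hipow : (1:ℝ) ≤ (i:ℝ) ^ (2*H₁) :=
          Real.one_le_rpow hi1 (by positivity)
        have hsq : (i:ℝ) ^ (2*H₁) = ((i:ℝ) ^ H₁) ^ 2 := by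
          rw [← Real.rpow_natCast ((i:ℝ) ^ H₁) 2, ← Real.rpow_mul hi0.le]
          norm_num [mul_comm]
        have hle : 1 + 2*(i:ℝ)^(2*H₁)*((n:ℝ)^α)^2
            ≤ (1 + 2*((n:ℝ)^α)^2) * (i:ℝ)^(2*H₁) := by nlinarith [sq_nonneg ((n:ℝ)^α)]
        have hs1 : Real.sqrt ((1 + 2*((n:ℝ)^α)^2) * (i:ℝ)^(2*H₁))
            = Real.sqrt (1 + 2*((n:ℝ)^α)^2) * (i:ℝ) ^ H₁ := by
          rw [Real.sqrt_mul (by positivity), hsq, Real.sqrt_sq (Real.rpow_nonneg hi0.le H₁)]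
        have hpos : (0:ℝ) < Real.sqrt (1 + 2*(i:ℝ)^(2*H₁)*((n:ℝ)^α)^2) :=
          Real.sqrt_pos.mpr (by positivity)
        have hmono := Real.sqrt_le_sqrt hle
        rw [hs1] at hmono
        have hinv := one_div_le_one_div_of_le hpos hmono
        rw [hu]
        simp only [one_div] at hinv ⊢
        calc (Real.sqrt (1 + 2*((n:ℝ)^α)^2))⁻¹ * (i:ℝ) ^ (-H₁)
            = (Real.sqrt (1 + 2*((n:ℝ)^α)^2) * (i:ℝ) ^ H₁)⁻¹ := by
              rw [mul_inv, Real.rpow_neg hi0.le]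
          _ ≤ _ := hinv
      have hsum2 := Finset.sum_le_sum hterm
      rw [← Finset.mul_sum] at hsum2
      have h3 := mul_le_mul_of_nonneg_left hsum2 (Real.rpow_nonneg hn0.le (α + H₁ - 1))
      calc (Real.sqrt ((n:ℝ) ^ (-(2*α)) + 2))⁻¹ * S n
          = (n:ℝ) ^ (α + H₁ - 1) *
              ((Real.sqrt (1 + 2*((n:ℝ)^α)^2))⁻¹ * ∑ i ∈ Finset.Ico 1 n, (i:ℝ) ^ (-H₁)) := by
            rw [← key1 n hn, hS]
            have : (n:ℝ) ^ (α + H₁ - 1) = (n:ℝ) ^ α * (n:ℝ) ^ (H₁ - 1) := by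
              rw [← Real.rpow_add hn0]; congr 1; ring
            rw [this]; ring
        _ ≤ _ := h3
    · -- upper bound
      filter_upwards [eventually_ge_atTop 1] with n hn
      have hn0 : (0:ℝ) < (n:ℝ) := by exact_mod_cast hn
      have hy : (0:ℝ) < (n:ℝ) ^ α := Real.rpow_pos_of_pos hn0 α
      have hterm : ∀ i ∈ Finset.Ico 1 n,
          u n i ≤ (Real.sqrt 2)⁻¹ * ((n:ℝ)^α)⁻¹ * (i:ℝ) ^ (-H₁) := by
        intro i hi
        have hi1 : (1:ℝ) ≤ (i:ℝ) := by
          exact_mod_cast (Finset.mem_Ico.mp hi).1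
        have hi0 : (0:ℝ) < (i:ℝ) := lt_of_lt_of_le one_pos hi1
        have hsq : (i:ℝ) ^ (2*H₁) = ((i:ℝ) ^ H₁) ^ 2 := by
          rw [← Real.rpow_natCast ((i:ℝ) ^ H₁) 2, ← Real.rpow_mul hi0.le]
          norm_num [mul_comm]
        have hle : 2*(i:ℝ)^(2*H₁)*((n:ℝ)^α)^2 ≤ 1 + 2*(i:ℝ)^(2*H₁)*((n:ℝ)^α)^2 := by linarith
        have hs1 : Real.sqrt (2*(i:ℝ)^(2*H₁)*((n:ℝ)^α)^2)
            = Real.sqrt 2 * (i:ℝ) ^ H₁ * (n:ℝ)^α := by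
          rw [Real.sqrt_mul (by positivity), Real.sqrt_mul (by norm_num), hsq,
            Real.sqrt_sq (Real.rpow_nonneg hi0.le H₁), Real.sqrt_sq hy.le]
        have hpos2 : (0:ℝ) < Real.sqrt (2*(i:ℝ)^(2*H₁)*((n:ℝ)^α)^2) := by
          rw [hs1]; positivity
        have hmono := Real.sqrt_le_sqrt hle
        have hinv := one_div_le_one_div_of_le hpos2 hmono
        rw [hs1] at hinv
        rw [hu]
        simp only [one_div] at hinv ⊢
        calc (Real.sqrt (1 + 2*(i:ℝ)^(2*H₁)*((n:ℝ)^α)^2))⁻¹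
            ≤ (Real.sqrt 2 * (i:ℝ) ^ H₁ * (n:ℝ)^α)⁻¹ := hinv
          _ = (Real.sqrt 2)⁻¹ * ((n:ℝ)^α)⁻¹ * (i:ℝ) ^ (-H₁) := by
              rw [mul_inv, mul_inv, Real.rpow_neg hi0.le]; ring
      have hsum2 := Finset.sum_le_sum hterm
      have h3 := mul_le_mul_of_nonneg_left hsum2 (Real.rpow_nonneg hn0.le (α + H₁ - 1))
      calc (n:ℝ) ^ (α + H₁ - 1) * ∑ i ∈ Finset.Ico 1 n, u n i
          ≤ (n:ℝ) ^ (α + H₁ - 1) *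
              ∑ i ∈ Finset.Ico 1 n, (Real.sqrt 2)⁻¹ * ((n:ℝ)^α)⁻¹ * (i:ℝ) ^ (-H₁) := h3
        _ = (Real.sqrt 2)⁻¹ * S n := by
            rw [← Finset.mul_sum, hS]
            have e1 : (n:ℝ) ^ (α + H₁ - 1) * ((n:ℝ)^α)⁻¹ = (n:ℝ) ^ (H₁ - 1) := by
              rw [← Real.rpow_neg hn0.le, ← Real.rpow_add hn0]; congr 1; ring
            calc (n:ℝ) ^ (α + H₁ - 1) * ((Real.sqrt 2)⁻¹ * ((n:ℝ)^α)⁻¹ *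
                  ∑ i ∈ Finset.Ico 1 n, (i:ℝ) ^ (-H₁))
                = (Real.sqrt 2)⁻¹ * (((n:ℝ) ^ (α + H₁ - 1) * ((n:ℝ)^α)⁻¹) *
                  ∑ i ∈ Finset.Ico 1 n, (i:ℝ) ^ (-H₁)) := by ring
              _ = _ := by rw [e1]
  -- add the i = 0 term
  have ha : Tendsto (fun n : ℕ => (n:ℝ) ^ (α + H₁ - 1)) atTop (𝓝 0) := by
    have h := (tendsto_rpow_neg_atTop (by linarith : (0:ℝ) < 1 - (α + H₁))).comp
      (tendsto_natCast_atTop_atTop (R := ℝ))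
    have e : (fun n : ℕ => (n:ℝ) ^ (α + H₁ - 1))
        = (fun x : ℝ => x ^ (-(1 - (α + H₁)))) ∘ (Nat.cast) := by
      funext n; simp only [Function.comp_apply]; congr 1; ring
    rw [e]; exact h
  have hfinal := ha.add hb
  rw [zero_add] at hfinal
  apply hfinal.congr'
  filter_upwards [eventually_ge_atTop 1] with n hn
  have h0 : u n 0 = 1 := by
    rw [hu]
    norm_num [Real.zero_rpow (ne_of_gt (by positivity : (0:ℝ) < 2*H₁))]
  rw [Finset.range_eq_Ico, Finset.sum_eq_sum_Ico_succ_bot hn (u n), h0]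
  ring

lemma law_B {Ω : Type*} [MeasurableSpace Ω] {μ : Measure Ω}
    {H₁ : ℝ} (hH₁ : 0 < H₁) {B : ℝ → Ω → ℝ} (hB : IsFBM μ H₁ B) (t : ℝ) (ht : 0 ≤ t)
    (c : ℝ) :
    ∫ ω, (K (c * B t ω)) ^ 2 ∂μ = (2 * π)⁻¹ * (Real.sqrt (1 + 2 * t ^ (2 * H₁) * c ^ 2))⁻¹ := by
  obtain ⟨v, hv⟩ := hB.gaussian 1 ![t] ![1] (fun i => by fin_cases i <;> simpa)
  have hmap : μ.map (B t) = gaussianReal 0 v := by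
    rw [← hv]; congr 1; funext ω; simp
  have hKmeas : Continuous fun x : ℝ => (K (c * x)) ^ 2 := by
    unfold K; fun_prop
  have h1 : ∫ ω, (K (c * B t ω)) ^ 2 ∂μ = ∫ x, (K (c * x)) ^ 2 ∂(gaussianReal 0 v) := by
    rw [← hmap, integral_map (hB.meas t).aemeasurable hKmeas.aestronglyMeasurable]
  have h2 : ∫ ω, (B t ω) ^ 2 ∂μ = ∫ x, x ^ 2 ∂(gaussianReal 0 v) := by
    rw [← hmap, integral_map (hB.meas t).aemeasurable]
    exact (continuous_pow 2).aestronglyMeasurable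
  have hvval : (v : ℝ) = t ^ (2 * H₁) := by
    rw [← integral_sq_gaussianReal v, ← h2]
    have := hB.cov t t ht ht
    simp_rw [← sq] at this
    rw [this, RH]
    rw [sub_self, abs_zero, Real.zero_rpow (by positivity)]
    ring
  rw [h1, integral_K_sq_gaussianReal, hvval]

end Aux

theorem statement0
    {Ω : Type*} [MeasurableSpace Ω] (μ : Measure Ω) [IsProbabilityMeasure μ]
    (H₁ α : ℝ) (hH₁ : 0 < H₁) (hH₁' : H₁ < 1) (hα : 0 < α) (hsum : α + H₁ < 1)
    (B : ℝ → Ω → ℝ) (hB : IsFBM μ H₁ B) :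
    Tendsto (fun n : ℕ =>
        (n : ℝ) ^ (α + H₁ - 1) *
          ∑ i ∈ Finset.range n, ∫ ω, (K ((n : ℝ) ^ α * B i ω)) ^ 2 ∂μ)
      atTop (𝓝 (1 / (2 * Real.pi * Real.sqrt 2 * (1 - H₁)))) := by
  have hrw : ∀ n : ℕ, ∑ i ∈ Finset.range n, ∫ ω, (K ((n:ℝ) ^ α * B i ω)) ^ 2 ∂μ
      = ∑ i ∈ Finset.range n,
          (2 * π)⁻¹ * (Real.sqrt (1 + 2 * (i:ℝ) ^ (2 * H₁) * ((n:ℝ) ^ α) ^ 2))⁻¹ := by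
    intro n
    refine Finset.sum_congr rfl (fun i _ => ?_)
    exact law_B hH₁ hB (i:ℝ) (Nat.cast_nonneg i) ((n:ℝ) ^ α)
  have h2 := (tendsto_main hH₁ hH₁' hα hsum).const_mul ((2 * π)⁻¹)
  have e : (fun n : ℕ => (n:ℝ) ^ (α + H₁ - 1) *
        ∑ i ∈ Finset.range n, ∫ ω, (K ((n:ℝ) ^ α * B i ω)) ^ 2 ∂μ)
      = fun n : ℕ => (2 * π)⁻¹ * ((n:ℝ) ^ (α + H₁ - 1) *
        ∑ i ∈ Finset.range n, (Real.sqrt (1 + 2 * (i:ℝ) ^ (2 * H₁) * ((n:ℝ) ^ α) ^ 2))⁻¹) := by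
    funext n
    rw [hrw n, ← Finset.mul_sum]
    ring
  have econst : 1 / (2 * Real.pi * Real.sqrt 2 * (1 - H₁))
      = (2 * π)⁻¹ * ((Real.sqrt 2)⁻¹ * (1 / (1 - H₁))) := by
    have h1 : Real.sqrt 2 ≠ 0 := by positivity
    have h2 : (1:ℝ) - H₁ ≠ 0 := by linarith
    field_simp
  rw [e, econst]
  exact h2
end

section
/- Let 0 < H₁ < 1 and α > 0, let B^{H₁} be a fractional Brownian motion with Hurst parameter H₁, and let τ > 0 be a constant such that s^{2H₁} r^{2H₁} − R_{H₁}(s,r)² ≥ τ (s−r)^{2H₁} r^{2H₁} for all 0 ≤ r ≤ s. Then for every n ≥ 1 and all integers i > j ≥ 1, E[K(n^α B^{H₁}_i) K(n^α B^{H₁}_j)] ≤ n^{−3α/2} / (2π √2 τ^{1/4} (i−j)^{H₁/2} j^{3H₁/4} i^{H₁/4}). -/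
open MeasureTheory ProbabilityTheory Real

/-!
Write `e^{-x²/2} = E[cos (x T)]` for a standard Gaussian `T`. With `S, T` independent standard
Gaussians, Fubini turns `E[K(aX) K(aY)]` into `(2π)⁻¹ E_{S,T}[E_ω cos (a (S X + T Y))]`, and the
inner expectation is the characteristic function `exp (-a² Q(S, T) / 2)` of the centered Gaussian
variable `S X + T Y`, where `Q` is the covariance form `Σ` of `(X, Y)`. The remaining Gaussian
integral equals `det (I + a² Σ)^{-1/2}`. For `X = B_i`, `Y = B_j` one has
`det (I + a² Σ) ≥ a² i^{2H} + a⁴ det Σ`, the hypothesis on `τ` bounds `det Σ` from below, and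
AM-GM together with `j ≤ i` gives the stated power of `a = n^α`.
-/

open scoped NNReal

theorem integral_exp_neg_mul_sq_add_mul {a : ℝ} (ha : 0 < a) (b : ℝ) :
    ∫ x, exp (-a * x ^ 2 + b * x) = √(π / a) * exp (b ^ 2 / (4 * a)) := by
  have hsq : ∀ x, -a * x ^ 2 + b * x = -a * (x - b / (2 * a)) ^ 2 + b ^ 2 / (4 * a) := by
    intro x; field_simp; ring
  simp_rw [hsq, exp_add]
  rw [integral_mul_const, integral_sub_right_eq_self (fun x => exp (-a * x ^ 2)),
    integral_gaussian]

theorem integral_exp_quadratic_gaussianReal {c : ℝ} (hc : 0 < 1 + c) (b : ℝ) :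
    ∫ x, exp (-(c * x ^ 2) / 2 + b * x) ∂gaussianReal 0 1 =
      exp (b ^ 2 / (2 * (1 + c))) / √(1 + c) := by
  rw [integral_gaussianReal_eq_integral_smul one_ne_zero]
  simp only [gaussianPDFReal, smul_eq_mul, NNReal.coe_one, mul_one, sub_zero]
  have h : ∀ x, (√(2 * π))⁻¹ * exp (-x ^ 2 / 2) * exp (-(c * x ^ 2) / 2 + b * x) =
      (√(2 * π))⁻¹ * exp (-((1 + c) / 2) * x ^ 2 + b * x) := by
    intro x; rw [mul_assoc, ← exp_add]; ring_nf
  simp_rw [h]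
  rw [integral_const_mul, integral_exp_neg_mul_sq_add_mul (by positivity),
    show π / ((1 + c) / 2) = 2 * π / (1 + c) by field_simp, sqrt_div (by positivity),
    show b ^ 2 / (4 * ((1 + c) / 2)) = b ^ 2 / (2 * (1 + c)) by ring]
  field_simp

theorem integral_exp_neg_quadratic_form_gaussianReal_prod {A B C : ℝ}
    (hQ : ∀ s t : ℝ, 0 ≤ A * s ^ 2 + 2 * B * s * t + C * t ^ 2) :
    ∫ p, exp (-(A * p.1 ^ 2 + 2 * B * p.1 * p.2 + C * p.2 ^ 2) / 2)
        ∂(gaussianReal 0 1).prod (gaussianReal 0 1) =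
      (√((1 + A) * (1 + C) - B ^ 2))⁻¹ := by
  have hC : 0 < 1 + C := by nlinarith [hQ 0 1]
  -- `(1 + C) * ((1 + A) * (1 + C) - B ^ 2)` is `(1 + C) ^ 2 + B ^ 2` plus the form at `(1 + C, -B)`
  have hD : 0 < (1 + A) * (1 + C) - B ^ 2 :=
    pos_of_mul_pos_right (by nlinarith [hQ (1 + C) (-B), sq_nonneg B]) hC.le
  have hc : 0 < 1 + (A - B ^ 2 / (1 + C)) := by
    rw [show 1 + (A - B ^ 2 / (1 + C)) = ((1 + A) * (1 + C) - B ^ 2) / (1 + C) by field_simp; ring]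
    positivity
  have hint : Integrable
      (fun p : ℝ × ℝ => exp (-(A * p.1 ^ 2 + 2 * B * p.1 * p.2 + C * p.2 ^ 2) / 2))
      ((gaussianReal 0 1).prod (gaussianReal 0 1)) := by
    refine Integrable.of_bound (by fun_prop) 1 (ae_of_all _ fun p => ?_)
    rw [norm_of_nonneg (exp_pos _).le, exp_le_one_iff]
    linarith [hQ p.1 p.2]
  have hinner : ∀ s : ℝ, ∫ t, exp (-(A * s ^ 2 + 2 * B * s * t + C * t ^ 2) / 2) ∂gaussianReal 0 1 =
      (√(1 + C))⁻¹ * exp (-((A - B ^ 2 / (1 + C)) * s ^ 2) / 2 + 0 * s) := by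
    intro s
    have h : ∀ t, exp (-(A * s ^ 2 + 2 * B * s * t + C * t ^ 2) / 2) =
        exp (-(A * s ^ 2) / 2) * exp (-(C * t ^ 2) / 2 + (-(B * s)) * t) := by
      intro t; rw [← exp_add]; ring_nf
    simp_rw [h]
    rw [integral_const_mul, integral_exp_quadratic_gaussianReal hC, mul_div, div_eq_inv_mul,
      ← exp_add]
    congr 2
    field_simp
    ring
  rw [integral_prod _ hint]
  simp_rw [hinner]
  rw [integral_const_mul, integral_exp_quadratic_gaussianReal hc, zero_pow two_ne_zero, zero_div,
    exp_zero, one_div, ← mul_inv, ← sqrt_mul hC.le]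
  congr 2
  field_simp
  ring

theorem integrable_cexp_ofReal_mul_I {Ω : Type*} [MeasurableSpace Ω] (μ : Measure Ω)
    [IsFiniteMeasure μ] {f : Ω → ℝ} (hf : Measurable f) :
    Integrable (fun ω => Complex.exp (f ω * Complex.I)) μ :=
  Integrable.of_bound (by fun_prop) 1 (ae_of_all _ fun ω => by rw [Complex.norm_exp_ofReal_mul_I])

theorem integral_cexp_mul_I_gaussianReal (v : ℝ≥0) (x : ℝ) :
    ∫ t, Complex.exp (↑(t * x) * Complex.I) ∂gaussianReal 0 v = exp (-(v * x ^ 2) / 2) := by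
  simp_rw [Complex.ofReal_mul, mul_comm _ (x : ℂ)]
  rw [← charFun_apply_real, charFun_gaussianReal]
  push_cast
  ring_nf

theorem integral_cos_mul_gaussianReal (v : ℝ≥0) (x : ℝ) :
    ∫ t, cos (t * x) ∂gaussianReal 0 v = exp (-(v * x ^ 2) / 2) := by
  have h := congrArg RCLike.re (integral_cexp_mul_I_gaussianReal v x)
  rw [← integral_re (integrable_cexp_ofReal_mul_I _ (by fun_prop))] at h
  simpa only [RCLike.re_to_complex, Complex.exp_ofReal_mul_I_re, Complex.ofReal_re] using h

theorem integral_sin_mul_gaussianReal (v : ℝ≥0) (x : ℝ) :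
    ∫ t, sin (t * x) ∂gaussianReal 0 v = 0 := by
  have h := congrArg RCLike.im (integral_cexp_mul_I_gaussianReal v x)
  rw [← integral_im (integrable_cexp_ofReal_mul_I _ (by fun_prop))] at h
  simpa only [RCLike.im_to_complex, Complex.exp_ofReal_mul_I_im, Complex.ofReal_im] using h

theorem K_mul_K_eq_integral_cos (x y : ℝ) :
    K x * K y =
      (2 * π)⁻¹ * ∫ p, cos (p.1 * x + p.2 * y) ∂(gaussianReal 0 1).prod (gaussianReal 0 1) := by
  have hbdd : ∀ f g : ℝ → ℝ, Continuous f → Continuous g → (∀ z, |f z| ≤ 1) → (∀ z, |g z| ≤ 1) →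
      Integrable (fun p : ℝ × ℝ => f (p.1 * x) * g (p.2 * y))
        ((gaussianReal 0 1).prod (gaussianReal 0 1)) := by
    intro f g hf hg hf1 hg1
    refine Integrable.of_bound (by fun_prop) 1 (ae_of_all _ fun p => ?_)
    rw [norm_mul, ← one_mul 1]
    exact mul_le_mul (hf1 _) (hg1 _) (norm_nonneg _) zero_le_one
  simp_rw [cos_add]
  rw [integral_sub (hbdd _ _ continuous_cos continuous_cos abs_cos_le_one abs_cos_le_one)
      (hbdd _ _ continuous_sin continuous_sin abs_sin_le_one abs_sin_le_one),
    integral_prod_mul (fun s => cos (s * x)) (fun t => cos (t * y)),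
    integral_prod_mul (fun s => sin (s * x)) (fun t => sin (t * y)),
    integral_cos_mul_gaussianReal, integral_cos_mul_gaussianReal, integral_sin_mul_gaussianReal]
  simp only [K, NNReal.coe_one, one_mul, zero_mul, sub_zero]
  rw [mul_mul_mul_comm, ← mul_inv, mul_self_sqrt (by positivity)]

section MapEqGaussianReal

variable {Ω : Type*} [MeasurableSpace Ω] {μ : Measure Ω} {Z : Ω → ℝ} {m : ℝ} {v : ℝ≥0}

theorem aemeasurable_of_map_eq_gaussianReal (h : μ.map Z = gaussianReal m v) : AEMeasurable Z μ :=
  aemeasurable_of_map_neZero (by rw [h]; infer_instance)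

theorem memLp_of_map_eq_gaussianReal (h : μ.map Z = gaussianReal m v) (p : ℝ≥0) : MemLp Z p μ := by
  have hp : MemLp id p (μ.map Z) := h ▸ memLp_id_gaussianReal p
  exact (memLp_map_measure_iff aestronglyMeasurable_id
    (aemeasurable_of_map_eq_gaussianReal h)).mp hp

theorem integral_sq_of_map_eq_gaussianReal (h : μ.map Z = gaussianReal 0 v) :
    ∫ ω, Z ω ^ 2 ∂μ = v := by
  rw [← integral_map (f := fun x => x ^ 2) (aemeasurable_of_map_eq_gaussianReal h) (by fun_prop), h,
    ← variance_of_integral_eq_zero (X := fun x => x) aemeasurable_id' integral_id_gaussianReal,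
    variance_fun_id_gaussianReal]

theorem integral_cos_of_map_eq_gaussianReal (h : μ.map Z = gaussianReal 0 v) :
    ∫ ω, cos (Z ω) ∂μ = exp (-(∫ ω, Z ω ^ 2 ∂μ) / 2) := by
  rw [integral_sq_of_map_eq_gaussianReal h,
    ← integral_map (f := cos) (aemeasurable_of_map_eq_gaussianReal h) (by fun_prop), h]
  simpa using integral_cos_mul_gaussianReal v 1

end MapEqGaussianReal

theorem integral_add_sq {Ω : Type*} [MeasurableSpace Ω] {μ : Measure Ω} {X Y : Ω → ℝ}
    (hX : MemLp X 2 μ) (hY : MemLp Y 2 μ) (c d : ℝ) :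
    ∫ ω, (c * X ω + d * Y ω) ^ 2 ∂μ =
      c ^ 2 * ∫ ω, X ω ^ 2 ∂μ + 2 * c * d * ∫ ω, X ω * Y ω ∂μ + d ^ 2 * ∫ ω, Y ω ^ 2 ∂μ := by
  have hXY : Integrable (fun ω => X ω * Y ω) μ := hX.integrable_mul hY
  have hX2 := hX.integrable_sq
  have hY2 := hY.integrable_sq
  have h : ∀ ω, (c * X ω + d * Y ω) ^ 2 =
      c ^ 2 * X ω ^ 2 + 2 * c * d * (X ω * Y ω) + d ^ 2 * Y ω ^ 2 := fun ω => by ring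
  simp_rw [h]
  have hXXY : Integrable (fun ω => c ^ 2 * X ω ^ 2 + 2 * c * d * (X ω * Y ω)) μ :=
    (hX2.const_mul _).add (hXY.const_mul _)
  rw [integral_add hXXY (hY2.const_mul _),
    integral_add (hX2.const_mul _) (hXY.const_mul _), integral_const_mul, integral_const_mul,
    integral_const_mul]

section GaussianPair

variable {Ω : Type*} [MeasurableSpace Ω] {μ : Measure Ω} {X Y : Ω → ℝ}

theorem memLp_two_of_gaussian_pair
    (hG : ∀ c d : ℝ, ∃ v : ℝ≥0, μ.map (fun ω => c * X ω + d * Y ω) = gaussianReal 0 v) :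
    MemLp X 2 μ ∧ MemLp Y 2 μ := by
  obtain ⟨v, hv⟩ := hG 1 0
  obtain ⟨w, hw⟩ := hG 0 1
  simp only [one_mul, zero_mul, add_zero, zero_add] at hv hw
  exact ⟨memLp_of_map_eq_gaussianReal hv 2, memLp_of_map_eq_gaussianReal hw 2⟩

theorem integral_cos_of_gaussian_pair
    (hG : ∀ c d : ℝ, ∃ v : ℝ≥0, μ.map (fun ω => c * X ω + d * Y ω) = gaussianReal 0 v) (c d : ℝ) :
    ∫ ω, cos (c * X ω + d * Y ω) ∂μ =
      exp (-(c ^ 2 * ∫ ω, X ω ^ 2 ∂μ + 2 * c * d * ∫ ω, X ω * Y ω ∂μ +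
        d ^ 2 * ∫ ω, Y ω ^ 2 ∂μ) / 2) := by
  obtain ⟨hX, hY⟩ := memLp_two_of_gaussian_pair hG
  obtain ⟨v, hv⟩ := hG c d
  rw [integral_cos_of_map_eq_gaussianReal hv, integral_add_sq hX hY]

theorem quadratic_form_nonneg_of_gaussian_pair
    (hG : ∀ c d : ℝ, ∃ v : ℝ≥0, μ.map (fun ω => c * X ω + d * Y ω) = gaussianReal 0 v) (c d : ℝ) :
    0 ≤ c ^ 2 * ∫ ω, X ω ^ 2 ∂μ + 2 * c * d * ∫ ω, X ω * Y ω ∂μ + d ^ 2 * ∫ ω, Y ω ^ 2 ∂μ := by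
  obtain ⟨hX, hY⟩ := memLp_two_of_gaussian_pair hG
  rw [← integral_add_sq hX hY]
  exact integral_nonneg fun ω => sq_nonneg _

theorem integral_K_mul_K_of_gaussian_pair [IsFiniteMeasure μ]
    (hXm : Measurable X) (hYm : Measurable Y)
    (hG : ∀ c d : ℝ, ∃ v : ℝ≥0, μ.map (fun ω => c * X ω + d * Y ω) = gaussianReal 0 v) (a : ℝ) :
    ∫ ω, K (a * X ω) * K (a * Y ω) ∂μ =
      (2 * π)⁻¹ * (√((1 + a ^ 2 * ∫ ω, X ω ^ 2 ∂μ) * (1 + a ^ 2 * ∫ ω, Y ω ^ 2 ∂μ) -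
        (a ^ 2 * ∫ ω, X ω * Y ω ∂μ) ^ 2))⁻¹ := by
  set γ := (gaussianReal 0 1).prod (gaussianReal 0 1)
  have hint : Integrable (fun q : Ω × (ℝ × ℝ) => cos (q.2.1 * (a * X q.1) + q.2.2 * (a * Y q.1)))
      (μ.prod γ) :=
    Integrable.of_bound (by fun_prop) 1 (ae_of_all _ fun q => abs_cos_le_one _)
  have hinner : ∀ p : ℝ × ℝ, ∫ ω, cos (p.1 * (a * X ω) + p.2 * (a * Y ω)) ∂μ =
      exp (-((a ^ 2 * ∫ ω, X ω ^ 2 ∂μ) * p.1 ^ 2 + 2 * (a ^ 2 * ∫ ω, X ω * Y ω ∂μ) * p.1 * p.2 +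
        (a ^ 2 * ∫ ω, Y ω ^ 2 ∂μ) * p.2 ^ 2) / 2) := by
    intro p
    simp_rw [← mul_assoc]
    rw [integral_cos_of_gaussian_pair hG]
    ring_nf
  simp_rw [K_mul_K_eq_integral_cos]
  rw [integral_const_mul, integral_integral_swap hint]
  simp_rw [hinner]
  rw [integral_exp_neg_quadratic_form_gaussianReal_prod fun s t => ?_]
  convert quadratic_form_nonneg_of_gaussian_pair hG (a * s) (a * t) using 1
  ring

end GaussianPair

theorem RH_self {H : ℝ} (hH : H ≠ 0) (t : ℝ) : RH H t t = t ^ (2 * H) := by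
  rw [RH, sub_self, abs_zero, zero_rpow (mul_ne_zero two_ne_zero hH)]
  ring

namespace IsFBM

variable {Ω : Type*} [MeasurableSpace Ω] {μ : Measure Ω} {H : ℝ} {B : ℝ → Ω → ℝ}

theorem map_add_eq_gaussianReal (hB : IsFBM μ H B) {s t : ℝ} (hs : 0 ≤ s) (ht : 0 ≤ t) (c d : ℝ) :
    ∃ v : ℝ≥0, μ.map (fun ω => c * B s ω + d * B t ω) = gaussianReal 0 v := by
  simpa [Fin.sum_univ_two] using hB.gaussian 2 ![s, t] ![c, d] (Fin.forall_fin_two.2 ⟨hs, ht⟩)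

theorem integral_sq (hB : IsFBM μ H B) (hH : H ≠ 0) {t : ℝ} (ht : 0 ≤ t) :
    ∫ ω, B t ω ^ 2 ∂μ = t ^ (2 * H) := by
  simp_rw [sq, hB.cov t t ht ht, RH_self hH]

end IsFBM

theorem two_mul_sq_le_det {u w d y x R : ℝ} (hy : 0 ≤ y) (hyx : y ≤ x)
    (h : w ^ 4 * (d ^ 8 * y ^ 8) ≤ x ^ 8 * y ^ 8 - R ^ 2) :
    2 * (u ^ 3 * w * d ^ 2 * y ^ 3 * x) ^ 2 ≤
      (1 + u ^ 4 * x ^ 8) * (1 + u ^ 4 * y ^ 8) - (u ^ 4 * R) ^ 2 := by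
  calc 2 * (u ^ 3 * w * d ^ 2 * y ^ 3 * x) ^ 2
      = 2 * (u ^ 6 * w ^ 2 * d ^ 4 * y ^ 4 * x ^ 2) * y ^ 2 := by ring
    _ ≤ 2 * (u ^ 6 * w ^ 2 * d ^ 4 * y ^ 4 * x ^ 2) * x ^ 2 := by
        gcongr
    _ = 2 * (u ^ 2 * x ^ 4) * (u ^ 4 * w ^ 2 * d ^ 4 * y ^ 4) := by ring
    _ ≤ (u ^ 2 * x ^ 4) ^ 2 + (u ^ 4 * w ^ 2 * d ^ 4 * y ^ 4) ^ 2 := two_mul_le_add_sq _ _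
    _ = u ^ 4 * x ^ 8 + u ^ 8 * (w ^ 4 * (d ^ 8 * y ^ 8)) := by ring
    _ ≤ u ^ 4 * x ^ 8 + u ^ 8 * (x ^ 8 * y ^ 8 - R ^ 2) := by gcongr
    _ ≤ (1 + u ^ 4 * x ^ 8) * (1 + u ^ 4 * y ^ 8) - (u ^ 4 * R) ^ 2 := by
        nlinarith [pow_nonneg (sq_nonneg u) 2, pow_nonneg (sq_nonneg y) 4]

theorem inv_two_pi_mul_inv_sqrt_det_le {u w d y x R : ℝ} (hu : 0 < u) (hw : 0 < w) (hd : 0 < d)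
    (hy : 0 < y) (hyx : y ≤ x) (h : w ^ 4 * (d ^ 8 * y ^ 8) ≤ x ^ 8 * y ^ 8 - R ^ 2) :
    (2 * π)⁻¹ * (√((1 + u ^ 4 * x ^ 8) * (1 + u ^ 4 * y ^ 8) - (u ^ 4 * R) ^ 2))⁻¹ ≤
      (u ^ 3)⁻¹ / (2 * π * √2 * w * d ^ 2 * y ^ 3 * x) := by
  have hm : 0 < u ^ 3 * w * d ^ 2 * y ^ 3 * x := by have := hy.trans_le hyx; positivity
  have hle : √2 * (u ^ 3 * w * d ^ 2 * y ^ 3 * x) ≤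
      √((1 + u ^ 4 * x ^ 8) * (1 + u ^ 4 * y ^ 8) - (u ^ 4 * R) ^ 2) := by
    rw [← sqrt_sq hm.le, ← sqrt_mul zero_le_two]
    exact sqrt_le_sqrt (two_mul_sq_le_det hy.le hyx h)
  calc (2 * π)⁻¹ * (√((1 + u ^ 4 * x ^ 8) * (1 + u ^ 4 * y ^ 8) - (u ^ 4 * R) ^ 2))⁻¹
      ≤ (2 * π)⁻¹ * (√2 * (u ^ 3 * w * d ^ 2 * y ^ 3 * x))⁻¹ :=
        mul_le_mul_of_nonneg_left (inv_anti₀ (by positivity) hle) (by positivity)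
    _ = (u ^ 3)⁻¹ / (2 * π * √2 * w * d ^ 2 * y ^ 3 * x) := by field_simp

theorem inv_two_pi_mul_inv_sqrt_det_le_rpow {H a τ r s R : ℝ} (hH : 0 ≤ H) (ha : 0 < a) (hτ : 0 < τ)
    (hr : 0 < r) (hrs : r < s)
    (hR : τ * ((s - r) ^ (2 * H) * r ^ (2 * H)) ≤ s ^ (2 * H) * r ^ (2 * H) - R ^ 2) :
    (2 * π)⁻¹ * (√((1 + a ^ 2 * s ^ (2 * H)) * (1 + a ^ 2 * r ^ (2 * H)) - (a ^ 2 * R) ^ 2))⁻¹ ≤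
      a ^ (-3 / 2 : ℝ) /
        (2 * π * √2 * τ ^ (1 / 4 : ℝ) * (s - r) ^ (H / 2) * r ^ (3 * H / 4) * s ^ (H / 4)) := by
  have hsr : 0 < s - r := sub_pos.mpr hrs
  -- pass to `√a` and the fourth roots `s ^ (H / 4)`, `r ^ (H / 4)`, `(s - r) ^ (H / 4)`,
  -- `τ ^ (1 / 4)`, in which every exponent becomes a natural number
  obtain ⟨u, hu, rfl⟩ : ∃ u, 0 < u ∧ a = u ^ 2 := ⟨√a, sqrt_pos.2 ha, (sq_sqrt ha.le).symm⟩
  have hτ4 : τ = (τ ^ (1 / 4 : ℝ)) ^ 4 := by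
    rw [← rpow_mul_natCast hτ.le]; norm_num
  rw [hτ4] at hR
  rw [show 2 * H = H / 4 * (8 : ℕ) by push_cast; ring] at hR ⊢
  rw [show H / 2 = H / 4 * (2 : ℕ) by push_cast; ring,
    show 3 * H / 4 = H / 4 * (3 : ℕ) by push_cast; ring,
    show (-3 / 2 : ℝ) = -(1 / 2 * (3 : ℕ)) by norm_num, rpow_neg ha.le, rpow_mul_natCast ha.le,
    ← sqrt_eq_rpow, sqrt_sq hu.le, ← pow_mul]
  simp only [rpow_mul_natCast hr.le, rpow_mul_natCast hsr.le, rpow_mul_natCast (hr.trans hrs).le]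
    at hR ⊢
  exact inv_two_pi_mul_inv_sqrt_det_le hu (rpow_pos_of_pos hτ _) (rpow_pos_of_pos hsr _)
    (rpow_pos_of_pos hr _) (rpow_le_rpow hr.le hrs.le (by positivity)) hR

theorem statement8_general
    {Ω : Type*} [MeasurableSpace Ω] (μ : Measure Ω) [IsProbabilityMeasure μ]
    (H₁ α : ℝ) (hH₁ : 0 < H₁)
    (B : ℝ → Ω → ℝ) (hB : IsFBM μ H₁ B)
    (τ : ℝ) (hτ : 0 < τ)
    (hτbound : ∀ r s : ℝ, 0 ≤ r → r ≤ s →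
      τ * ((s - r) ^ (2 * H₁) * r ^ (2 * H₁)) ≤
        s ^ (2 * H₁) * r ^ (2 * H₁) - (RH H₁ s r) ^ 2) :
    ∀ n : ℕ, 1 ≤ n → ∀ i j : ℕ, 1 ≤ j → j < i →
      ∫ ω, K ((n : ℝ) ^ α * B i ω) * K ((n : ℝ) ^ α * B j ω) ∂μ ≤
        (n : ℝ) ^ (-(3 * α) / 2) /
          (2 * Real.pi * Real.sqrt 2 * τ ^ ((1 : ℝ) / 4) *
            ((i : ℝ) - j) ^ (H₁ / 2) * (j : ℝ) ^ (3 * H₁ / 4) * (i : ℝ) ^ (H₁ / 4)) := by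
  intro n hn i j hj hij
  have hn0 : (0 : ℝ) < n := by exact_mod_cast hn
  have hj0 : (0 : ℝ) < j := by exact_mod_cast hj
  have hji : (j : ℝ) < i := by exact_mod_cast hij
  have hi0 : (0 : ℝ) ≤ i := hj0.le.trans hji.le
  rw [integral_K_mul_K_of_gaussian_pair (hB.meas i) (hB.meas j)
      (hB.map_add_eq_gaussianReal hi0 hj0.le), hB.integral_sq hH₁.ne' hi0,
    hB.integral_sq hH₁.ne' hj0.le, hB.cov i j hi0 hj0.le]
  calc _ ≤ ((n : ℝ) ^ α) ^ (-3 / 2 : ℝ) / _ :=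
        inv_two_pi_mul_inv_sqrt_det_le_rpow hH₁.le (rpow_pos_of_pos hn0 α) hτ hj0 hji
          (hτbound j i hj0.le hji.le)
    _ = _ := by rw [← rpow_mul hn0.le]; ring_nf

theorem statement8
    {Ω : Type*} [MeasurableSpace Ω] (μ : Measure Ω) [IsProbabilityMeasure μ]
    (H₁ α : ℝ) (hH₁ : 0 < H₁) (hH₁' : H₁ < 1) (hα : 0 < α)
    (B : ℝ → Ω → ℝ) (hB : IsFBM μ H₁ B)
    (τ : ℝ) (hτ : 0 < τ)
    (hτbound : ∀ r s : ℝ, 0 ≤ r → r ≤ s →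
      τ * ((s - r) ^ (2 * H₁) * r ^ (2 * H₁)) ≤
        s ^ (2 * H₁) * r ^ (2 * H₁) - (RH H₁ s r) ^ 2) :
    ∀ n : ℕ, 1 ≤ n → ∀ i j : ℕ, 1 ≤ j → j < i →
      ∫ ω, K ((n : ℝ) ^ α * B i ω) * K ((n : ℝ) ^ α * B j ω) ∂μ ≤
        (n : ℝ) ^ (-(3 * α) / 2) /
          (2 * Real.pi * Real.sqrt 2 * τ ^ ((1 : ℝ) / 4) *
            ((i : ℝ) - j) ^ (H₁ / 2) * (j : ℝ) ^ (3 * H₁ / 4) * (i : ℝ) ^ (H₁ / 4)) :=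
  statement8_general μ H₁ α hH₁ B hB τ hτ hτbound
end
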